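/- arXiv:1505.05350 — 5 statements merged into one kernel-verified Lean document; each statement's English description precedes it below -/
import Mathlib

section
/- For every positive integer j ≥ 3, the sum over primes p dividing j of (log p)/p is O(log log j); precisely, there exists a constant C such that for all j ≥ 3, ∑_{p | j} (log p)/p ≤ C · log log j. -/
/-!
Split the prime factors of `j` at `y = ⌊log j⌋`. Since their product divides `j`, the logarithms
of the prime factors sum to at most `log j`, so those above `y` contribute at most
`log j / (y + 1) ≤ 1`. Those up to `y` contribute at most `∑_{p ≤ y} log p / p ≤ 4 log y`, a weak
form of Mertens' theorem proved by induction on `y`: by Chebyshev's bound `θ(n) ≤ n log 4`, the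
primes in `(n/2, n]` contribute at most `θ(n) / (n/2) ≤ 2 log 4 = 4 log 2`.
-/

open Finset Real

theorem sum_log_div_self_le_sum_log_div {s : Finset ℕ} {y : ℝ} (hy : 0 < y)
    (hs : ∀ p ∈ s, y ≤ p) : ∑ p ∈ s, log p / p ≤ (∑ p ∈ s, log p) / y := by
  rw [sum_div]
  exact sum_le_sum fun p hp => div_le_div_of_nonneg_left (log_natCast_nonneg p) hy (hs p hp)

theorem sum_log_primeFactors_le_log (n : ℕ) : ∑ p ∈ n.primeFactors, log p ≤ log n := by
  rcases n.eq_zero_or_pos with rfl | hn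
  · simp
  rw [← log_prod fun p hp => by exact_mod_cast (Nat.prime_of_mem_primeFactors hp).ne_zero]
  exact log_le_log (prod_pos fun p hp => by exact_mod_cast (Nat.prime_of_mem_primeFactors hp).pos)
    (by rw [← Nat.cast_prod]; exact_mod_cast Nat.le_of_dvd hn (Nat.prod_primeFactors_dvd n))

theorem filter_primesLE_le {m n : ℕ} (h : m ≤ n) :
    {p ∈ Nat.primesLE n | p ≤ m} = Nat.primesLE m := by
  ext p; simp only [mem_filter, Nat.mem_primesLE]; grind

theorem sum_log_div_self_upper_half_primesLE_le (n : ℕ) :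
    ∑ p ∈ Nat.primesLE n with ¬p ≤ n / 2, log p / p ≤ 2 * log 4 := by
  calc ∑ p ∈ Nat.primesLE n with ¬p ≤ n / 2, log p / p
      ≤ (∑ p ∈ Nat.primesLE n with ¬p ≤ n / 2, log p) / ((n / 2 : ℕ) + 1 : ℕ) :=
        sum_log_div_self_le_sum_log_div (by positivity) fun p hp => by
          simp only [mem_filter] at hp; exact_mod_cast (by omega : n / 2 + 1 ≤ p)
    _ ≤ log 4 * n / ((n / 2 : ℕ) + 1 : ℕ) := by
        gcongr
        calc _ ≤ ∑ p ∈ Nat.primesLE n, log p :=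
              sum_le_sum_of_subset_of_nonneg (filter_subset _ _)
                fun p _ _ => log_natCast_nonneg p
          _ = Chebyshev.theta n := (Chebyshev.theta_eq_sum_primesLE_log n).symm
          _ ≤ log 4 * n := Chebyshev.theta_le_log4_mul_x n.cast_nonneg
    _ ≤ 2 * log 4 := by
        rw [div_le_iff₀ (by positivity), mul_comm 2, mul_assoc]
        gcongr
        exact_mod_cast (by omega : n ≤ 2 * (n / 2 + 1))

theorem sum_primesLE_log_div_self_le (n : ℕ) :
    ∑ p ∈ Nat.primesLE n, log p / p ≤ 4 * log n := by
  induction n using Nat.strong_induction_on with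
  | _ n ih =>
  rcases lt_or_ge n 2 with hn | hn
  · interval_cases n <;> simp
  have hm : 1 ≤ n / 2 := by omega
  have hlog : log (n / 2 : ℕ) + log 2 ≤ log n := by
    rw [← log_mul (by positivity) (by norm_num)]
    exact log_le_log (by positivity) (by exact_mod_cast Nat.div_mul_le_self n 2)
  have hlog4 : log 4 = 2 * log 2 := by
    rw [show (4 : ℝ) = 2 ^ 2 by norm_num, log_pow]; norm_num
  rw [← sum_filter_add_sum_filter_not _ (· ≤ n / 2), filter_primesLE_le (by omega)]
  linarith [ih (n / 2) (by omega), sum_log_div_self_upper_half_primesLE_le n]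

theorem sum_primeFactors_log_div_self_le (n y : ℕ) :
    ∑ p ∈ n.primeFactors, log p / p ≤ 4 * log y + log n / (y + 1) := by
  rw [← sum_filter_add_sum_filter_not _ (· ≤ y)]
  gcongr ?_ + ?_
  · calc _ ≤ ∑ p ∈ Nat.primesLE y, log p / p :=
          sum_le_sum_of_subset_of_nonneg
            (fun p hp => by
              simp only [mem_filter] at hp
              exact Nat.mem_primesLE.2 ⟨hp.2, Nat.prime_of_mem_primeFactors hp.1⟩)
            fun p _ _ => div_nonneg (log_natCast_nonneg p) p.cast_nonneg
      _ ≤ 4 * log y := sum_primesLE_log_div_self_le y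
  · calc _ ≤ (∑ p ∈ n.primeFactors with ¬p ≤ y, log p) / (y + 1) :=
          sum_log_div_self_le_sum_log_div (by positivity) fun p hp => by
            simp only [mem_filter] at hp; exact_mod_cast (by omega : y + 1 ≤ p)
      _ ≤ log n / (y + 1) := by
          gcongr
          exact (sum_le_sum_of_subset_of_nonneg (filter_subset _ _)
            fun p _ _ => log_natCast_nonneg p).trans (sum_log_primeFactors_le_log n)

theorem sum_log_div_self_primeFactors_bigO :
    ∃ C : ℝ, ∀ j : ℕ, 3 ≤ j →
      ∑ p ∈ j.primeFactors, Real.log p / p ≤ C * Real.log (Real.log j) := by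
  have hlog3 : 1 < log 3 := by
    rw [lt_log_iff_exp_lt (by norm_num)]
    exact exp_one_lt_d9.trans (by norm_num)
  have hloglog3 : 0 < log (log 3) := log_pos hlog3
  refine ⟨4 + 1 / log (log 3), fun j hj => ?_⟩
  have hL3 : log 3 ≤ log j := log_le_log (by norm_num) (by exact_mod_cast hj)
  have hL : 1 ≤ log j := hlog3.le.trans hL3
  have hfloor : (⌊log j⌋₊ : ℝ) ≤ log j := Nat.floor_le (by linarith)
  have hsmall : log ⌊log j⌋₊ ≤ log (log j) :=
    log_le_log (by exact_mod_cast Nat.one_le_floor_iff _ |>.2 hL) hfloor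
  have hlarge : log j / (⌊log j⌋₊ + 1) ≤ 1 :=
    (div_le_one (by positivity)).2 (Nat.lt_floor_add_one _).le
  have hone : 1 ≤ 1 / log (log 3) * log (log j) := by
    rw [one_div_mul_eq_div, one_le_div hloglog3]
    exact log_le_log (by positivity) hL3
  linarith [sum_primeFactors_log_div_self_le j ⌊log j⌋₊]
end

section
/- For positive integers a₁, a₂, real D > 1, and continuous f : [1,D] → ℝ, the iterated integral ∫₁^D (log x₁)^{a₁-1}/x₁ ∫₁^{D/x₁} (log x₂)^{a₂-1}/x₂ ∫₁^{D/(x₁x₂)} f(x₁x₂x)/x dx dx₂ dx₁ equals ((a₁-1)!(a₂-1)!/(a₁+a₂)!) · ∫₁^D f(x)(log x)^{a₁+a₂}/x dx. -/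
/-!
Let `G₀ = f` and `Gₙ₊₁(y) = ∫_y^D Gₙ(x) dx/x`. The substitution `x ↦ y x` turns the innermost
integral into `G₁(x₁x₂)`, and then the middle one into `∫_{x₁}^D G₁(z) log(z/x₁)^(a₂-1) dz/z`.
Integrating by parts against `d(log(x/c)^(n+1)) = (n+1) log(x/c)^n dx/x` trades one primitive
for one power of the logarithm, whence
`(n+j)! ∫_c^D G_{k+j}(x) log(x/c)^n dx/x = n! ∫_c^D G_k(x) log(x/c)^(n+j) dx/x`.
So the middle integral is `(a₂-1)! G_{a₂+1}(x₁)`, and one more application to the outer integral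
gives the claim.
-/

open Real Set intervalIntegral
open scoped Nat

theorem integral_comp_mul_div_self (h : ℝ → ℝ) {y : ℝ} (hy : y ≠ 0) (D : ℝ) :
    ∫ x in (1 : ℝ)..D / y, h (y * x) / x = ∫ x in y..D, h x / x := by
  have scale := smul_integral_comp_mul_left (fun x => h x / x) y (a := 1) (b := D / y)
  rw [mul_one, mul_div_cancel₀ _ hy, smul_eq_mul, ← integral_const_mul] at scale
  rw [← scale]
  congr 1 with x
  rw [mul_div_assoc', mul_div_mul_left _ _ hy]

theorem hasDerivAt_log_div_pow {c x : ℝ} (hc : 0 < c) (hx : 0 < x) (n : ℕ) :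
    HasDerivAt (fun x => log (x / c) ^ (n + 1)) ((n + 1) * log (x / c) ^ n / x) x := by
  have h := (((hasDerivAt_id' x).div_const c).log (div_pos hx hc).ne').fun_pow (n + 1)
  refine h.congr_deriv ?_
  rw [Nat.add_sub_cancel]
  field_simp
  push_cast
  ring

/-- `iteratedPrimitive f D n` is the `n`-fold primitive of `f` with respect to the measure
`dx / x`, anchored at the right endpoint `D`. -/
noncomputable def iteratedPrimitive (f : ℝ → ℝ) (D : ℝ) : ℕ → ℝ → ℝ
  | 0 => f
  | n + 1 => fun y => ∫ x in y..D, iteratedPrimitive f D n x / x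

section IteratedPrimitive

variable {f : ℝ → ℝ} {c D : ℝ}

theorem continuousOn_iteratedPrimitive_div {n : ℕ} (hc : 0 < c)
    (hG : ContinuousOn (iteratedPrimitive f D n) (Icc c D)) :
    ContinuousOn (fun x => iteratedPrimitive f D n x / x) (Icc c D) :=
  hG.div continuousOn_id fun _ hx => (hc.trans_le hx.1).ne'

theorem continuousOn_iteratedPrimitive (hc : 0 < c) (hcD : c ≤ D)
    (hf : ContinuousOn f (Icc c D)) : ∀ n, ContinuousOn (iteratedPrimitive f D n) (Icc c D)
  | 0 => hf
  | n + 1 => by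
    have h := continuousOn_iteratedPrimitive_div hc (continuousOn_iteratedPrimitive hc hcD hf n)
    rw [← uIcc_of_le hcD] at h ⊢
    exact continuousOn_primitive_interval_left (h.integrableOn_compact isCompact_uIcc)

theorem hasDerivAt_iteratedPrimitive_succ (hc : 0 < c) (hcD : c ≤ D)
    (hf : ContinuousOn f (Icc c D)) (n : ℕ) {y : ℝ} (hy : y ∈ Ioo c D) :
    HasDerivAt (iteratedPrimitive f D (n + 1)) (-(iteratedPrimitive f D n y / y)) y := by
  have h := continuousOn_iteratedPrimitive_div hc (continuousOn_iteratedPrimitive hc hcD hf n)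
  refine integral_hasDerivAt_left ?_
    ((h.mono Ioo_subset_Icc_self).stronglyMeasurableAtFilter isOpen_Ioo y hy)
    (h.continuousAt (Icc_mem_nhds hy.1 hy.2))
  exact (h.mono (by rw [uIcc_of_le hy.2.le]; exact Icc_subset_Icc_left hy.1.le)).intervalIntegrable

theorem integral_iteratedPrimitive_succ_mul_log_pow (hc : 0 < c) (hcD : c ≤ D)
    (hf : ContinuousOn f (Icc c D)) (k n : ℕ) :
    (n + 1 : ℝ) * ∫ x in c..D, iteratedPrimitive f D (k + 1) x * log (x / c) ^ n / x =
      ∫ x in c..D, iteratedPrimitive f D k x * log (x / c) ^ (n + 1) / x := by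
  have hG := continuousOn_iteratedPrimitive hc hcD hf
  have hlog : ContinuousOn (fun x => log (x / c)) (Icc c D) :=
    (continuousOn_id.div_const c).log fun x hx => (div_pos (hc.trans_le hx.1) hc).ne'
  have hv' : ContinuousOn (fun x => (n + 1) * log (x / c) ^ n / x) (Icc c D) :=
    (continuousOn_const.mul (hlog.pow n)).div continuousOn_id fun x hx => (hc.trans_le hx.1).ne'
  have hu' := (continuousOn_iteratedPrimitive_div hc (hG k)).neg
  have hIoo : Ioo (min c D) (max c D) = Ioo c D := by rw [min_eq_left hcD, max_eq_right hcD]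
  rw [← uIcc_of_le hcD] at hG hlog hv' hu'
  have parts := integral_mul_deriv_eq_deriv_mul_of_hasDerivAt (hG (k + 1))
    (hlog.fun_pow (n + 1))
    (fun y hy => hasDerivAt_iteratedPrimitive_succ hc hcD hf k (hIoo ▸ hy))
    (fun y hy => hasDerivAt_log_div_pow hc (hc.trans (hIoo ▸ hy).1) n)
    hu'.intervalIntegrable hv'.intervalIntegrable
  have hD : iteratedPrimitive f D (k + 1) D = 0 := integral_same
  rw [hD, div_self hc.ne', log_one, zero_pow n.succ_ne_zero] at parts
  calc _ = ∫ x in c..D, iteratedPrimitive f D (k + 1) x * ((n + 1) * log (x / c) ^ n / x) := by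
        rw [← integral_const_mul]
        congr 1 with x
        ring
    _ = _ := by
        rw [parts]
        simp only [zero_mul, mul_zero, sub_zero, zero_sub, ← integral_neg]
        congr 1 with x
        ring

theorem factorial_mul_integral_iteratedPrimitive_add (hc : 0 < c) (hcD : c ≤ D)
    (hf : ContinuousOn f (Icc c D)) :
    ∀ j n k : ℕ,
      ((n + j)! : ℝ) * ∫ x in c..D, iteratedPrimitive f D (k + j) x * log (x / c) ^ n / x =
        n ! * ∫ x in c..D, iteratedPrimitive f D k x * log (x / c) ^ (n + j) / x
  | 0, _, _ => rfl
  | j + 1, n, k => by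
    rw [show k + (j + 1) = k + 1 + j by omega, ← add_assoc, Nat.factorial_succ, Nat.cast_mul,
      mul_assoc, factorial_mul_integral_iteratedPrimitive_add hc hcD hf j n (k + 1),
      ← integral_iteratedPrimitive_succ_mul_log_pow hc hcD hf k (n + j)]
    push_cast
    ring

/-- Cauchy's formula for repeated integration. -/
theorem factorial_mul_iteratedPrimitive (hc : 0 < c) (hcD : c ≤ D)
    (hf : ContinuousOn f (Icc c D)) (k n : ℕ) :
    (n ! : ℝ) * iteratedPrimitive f D (k + n + 1) c =
      ∫ x in c..D, iteratedPrimitive f D k x * log (x / c) ^ n / x := by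
  have h := factorial_mul_integral_iteratedPrimitive_add hc hcD hf n 0 k
  simp only [zero_add, pow_zero, mul_one, Nat.factorial_zero, Nat.cast_one, one_mul] at h
  exact h

theorem integral_log_pow_mul_integral_comp_mul (hc : 0 < c) (hcD : c ≤ D)
    (hf : ContinuousOn f (Icc c D)) (n : ℕ) :
    (∫ x₂ in (1:ℝ)..(D / c), log x₂ ^ n / x₂ * ∫ x in (1:ℝ)..(D / (c * x₂)), f (c * x₂ * x) / x) =
      n ! * iteratedPrimitive f D (n + 2) c := by
  calc _ = ∫ x₂ in (1:ℝ)..(D / c),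
        iteratedPrimitive f D 1 (c * x₂) * log (c * x₂ / c) ^ n / x₂ := by
        refine integral_congr fun x₂ hx₂ => ?_
        have hx₂0 : x₂ ≠ 0 := by
          rw [uIcc_of_le ((one_le_div hc).2 hcD)] at hx₂
          exact (one_pos.trans_le hx₂.1).ne'
        rw [integral_comp_mul_div_self f (mul_ne_zero hc.ne' hx₂0), mul_div_cancel_left₀ _ hc.ne']
        change _ = (∫ x in c * x₂..D, f x / x) * _ / _
        ring
    _ = ∫ x in c..D, iteratedPrimitive f D 1 x * log (x / c) ^ n / x :=
        integral_comp_mul_div_self (fun x => iteratedPrimitive f D 1 x * log (x / c) ^ n) hc.ne' D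
    _ = n ! * iteratedPrimitive f D (n + 2) c := by
        rw [← factorial_mul_iteratedPrimitive hc hcD hf, add_comm 1 n]

end IteratedPrimitive

theorem iterated_log_integral_two (a₁ a₂ : ℕ) (ha₁ : 0 < a₁) (ha₂ : 0 < a₂)
    (D : ℝ) (hD : 1 < D) (f : ℝ → ℝ) (hf : ContinuousOn f (Set.Icc 1 D)) :
    (∫ x₁ in (1:ℝ)..D, (Real.log x₁) ^ (a₁ - 1) / x₁ *
        ∫ x₂ in (1:ℝ)..(D / x₁), (Real.log x₂) ^ (a₂ - 1) / x₂ *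
          ∫ x in (1:ℝ)..(D / (x₁ * x₂)), f (x₁ * x₂ * x) / x) =
      ((Nat.factorial (a₁ - 1) * Nat.factorial (a₂ - 1) : ℝ) /
          (Nat.factorial (a₁ + a₂) : ℝ)) *
        ∫ x in (1:ℝ)..D, f x * (Real.log x) ^ (a₁ + a₂) / x := by
  have middle : ∀ x₁ ∈ uIcc 1 D, (∫ x₂ in (1:ℝ)..(D / x₁), log x₂ ^ (a₂ - 1) / x₂ *
      ∫ x in (1:ℝ)..(D / (x₁ * x₂)), f (x₁ * x₂ * x) / x) =
        (a₂ - 1)! * iteratedPrimitive f D (a₂ + 1) x₁ := by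
    intro x₁ hx₁
    rw [uIcc_of_le hD.le] at hx₁
    rw [show a₂ + 1 = a₂ - 1 + 2 by omega]
    exact integral_log_pow_mul_integral_comp_mul (one_pos.trans_le hx₁.1) hx₁.2
      (hf.mono (Icc_subset_Icc_left hx₁.1)) (a₂ - 1)
  have outer := factorial_mul_integral_iteratedPrimitive_add one_pos hD.le hf (a₂ + 1) (a₁ - 1) 0
  rw [show a₁ - 1 + (a₂ + 1) = a₁ + a₂ by omega, zero_add] at outer
  simp only [div_one] at outer
  change _ = _ * ∫ x in (1:ℝ)..D, f x * log x ^ (a₁ + a₂) / x at outer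
  calc _ = ∫ x₁ in (1:ℝ)..D,
        (a₂ - 1)! * (iteratedPrimitive f D (a₂ + 1) x₁ * log x₁ ^ (a₁ - 1) / x₁) :=
        integral_congr fun x₁ hx₁ => by rw [middle x₁ hx₁]; ring
    _ = _ := by
        rw [integral_const_mul]
        field_simp
        linear_combination outer
end

section
/- For any positive integer m, positive integers a₁,…,a_m, real D > 1, and continuous f : [1,D] → ℝ, the m+1-fold iterated integral ∫₁^D (log x₁)^{a₁-1}/x₁ ⋯ ∫₁^{D/(x₁⋯x_{m-1})} (log x_m)^{a_m-1}/x_m ∫₁^{D/(x₁⋯x_m)} f(x₁⋯x_m·x)/x dx dx_m ⋯ dx₁ equals (∏_{i=1}^m (a_i−1)!) / (∑_{i=1}^m a_i)! · ∫₁^D f(x)(log x)^{∑ a_i}/x dx. -/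
open intervalIntegral in
/-- The iterated integral
`∫₁^{D/t} (log x₁)^{a₁-1}/x₁ ⋯ ∫₁^{D/(t·x₁⋯x_m)} f(t·x₁⋯x_m·x)/x dx ⋯ dx₁`,
defined by recursion on the list of exponents, where `t` is the accumulated
product of the previously chosen variables. -/
noncomputable def iterLogIntegral (D : ℝ) (f : ℝ → ℝ) : List ℕ → ℝ → ℝ
  | [], t => ∫ x in (1:ℝ)..(D / t), f (t * x) / x
  | a :: as, t =>
      ∫ x in (1:ℝ)..(D / t), (Real.log x) ^ (a - 1) / x * iterLogIntegral D f as (t * x)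

/-!
Substituting `x = exp y` turns each factor `(log x)^(a-1) dx / x` into `y^(a-1) dy`, so in
logarithmic coordinates the iterated integral is a nested integral over a simplex. Peeling off
the outermost variable, the induction step is the convolution identity
`∫_c^L (w-c)^p ∫_w^L g z (z-w)^s dz dw = p! s! / (p+s+1)! ∫_c^L g z (z-c)^(p+s+1) dz`,
which follows from Fubini on the triangle `c ≤ w ≤ z ≤ L` and the Beta integral
`∫_c^z (w-c)^p (z-w)^s dw = p! s! / (p+s+1)! (z-c)^(p+s+1)`.
Since `f` is only continuous on `[1, D]`, it is first replaced by its constant extension to `ℝ`,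
which changes neither side.
-/

open Set MeasureTheory intervalIntegral Nat Real

theorem integral_integral_swap_triangle {F : ℝ → ℝ → ℝ} (hF : Continuous F.uncurry) {a b : ℝ}
    (hab : a ≤ b) :
    ∫ w in a..b, ∫ z in w..b, F w z = ∫ z in a..b, ∫ w in a..z, F w z := by
  set G : ℝ → ℝ → ℝ := fun w z => {p : ℝ × ℝ | p.1 < p.2}.indicator F.uncurry (w, z)
  have hG : IntegrableOn G.uncurry (uIoc a b ×ˢ uIoc a b) :=
    ((hF.continuousOn.integrableOn_compact (isCompact_uIcc.prod isCompact_uIcc)).mono_set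
      (prod_mono uIoc_subset_uIcc uIoc_subset_uIcc)).indicator
      (measurableSet_lt measurable_fst measurable_snd)
  have inner_left : ∀ w ∈ uIcc a b, ∫ z in w..b, F w z = ∫ z in a..b, G w z := by
    intro w hw
    rw [uIcc_of_le hab] at hw
    have : G w = (Ioi w).indicator (F w) := rfl
    rw [this, integral_of_le hab, integral_of_le hw.2,
      MeasureTheory.integral_indicator measurableSet_Ioi,
      Measure.restrict_restrict measurableSet_Ioi, inter_comm, Ioc_inter_Ioi, max_eq_right hw.1]
  have inner_right : ∀ z ∈ uIcc a b, ∫ w in a..z, F w z = ∫ w in a..b, G w z := by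
    intro z hz
    rw [uIcc_of_le hab] at hz
    have : (fun w => G w z) =ᵐ[volume] {w | w ≤ z}.indicator (fun w => F w z) :=
      indicator_ae_eq_of_ae_eq_set Iio_ae_eq_Iic
    rw [integral_of_le hab, integral_congr_ae (ae_restrict_of_ae this), ← integral_of_le hab,
      intervalIntegral.integral_indicator hz]
  rw [integral_congr inner_left, intervalIntegral_intervalIntegral_swap hG,
    integral_congr inner_right]

theorem integral_sub_pow_mul_sub_pow (c z : ℝ) (p s : ℕ) :
    ∫ w in c..z, (w - c) ^ p * (z - w) ^ s
      = (p ! * s ! / (p + s + 1)! : ℝ) * (z - c) ^ (p + s + 1) := by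
  induction p generalizing s with
  | zero =>
    simp only [pow_zero, one_mul, zero_add, factorial_zero, Nat.cast_one]
    rw [integral_comp_sub_left (fun w => w ^ s), sub_self, integral_pow, factorial_succ]
    push_cast
    field_simp
    ring
  | succ p ih =>
    -- integration by parts trades a factor of `w - c` for one of `z - w`
    have hu : ∀ w ∈ uIcc c z, HasDerivAt (fun w => (w - c) ^ (p + 1))
        ((p + 1 : ℕ) * (w - c) ^ p) w := fun w _ => by
      simpa using (hasDerivAt_pow (p + 1) (w - c)).comp_sub_const w c
    have hv : ∀ w ∈ uIcc c z, HasDerivAt (fun w => -(z - w) ^ (s + 1) / (s + 1 : ℕ))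
        ((z - w) ^ s) w := fun w _ => by
      refine ((((hasDerivAt_id' w).const_sub z).pow (s + 1)).neg.div_const
        ((s + 1 : ℕ) : ℝ)).congr_deriv ?_
      rw [Nat.add_sub_cancel]
      field_simp
    rw [integral_mul_deriv_eq_deriv_mul hu hv (by apply Continuous.intervalIntegrable; fun_prop)
      (by apply Continuous.intervalIntegrable; fun_prop)]
    have hint : ∫ w in c..z, ((p + 1 : ℕ) : ℝ) * (w - c) ^ p * (-(z - w) ^ (s + 1) / (s + 1 : ℕ))
        = -((p + 1 : ℕ) / (s + 1 : ℕ) : ℝ) * ∫ w in c..z, (w - c) ^ p * (z - w) ^ (s + 1) := by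
      rw [← intervalIntegral.integral_const_mul]
      congr 1; ext w; ring
    rw [hint, ih, sub_self, sub_self, zero_pow (succ_ne_zero _), zero_pow (succ_ne_zero _)]
    rw [show p + (s + 1) + 1 = p + 1 + s + 1 by ring, factorial_succ p, factorial_succ s]
    push_cast
    field_simp
    ring

theorem integral_sub_pow_mul_integral_mul_sub_pow {g : ℝ → ℝ} (hg : Continuous g) (p s : ℕ)
    {c L : ℝ} (hcL : c ≤ L) :
    ∫ w in c..L, (w - c) ^ p * ∫ z in w..L, g z * (z - w) ^ s
      = (p ! * s ! / (p + s + 1)! : ℝ) * ∫ z in c..L, g z * (z - c) ^ (p + s + 1) := by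
  simp_rw [← intervalIntegral.integral_const_mul]
  rw [integral_integral_swap_triangle (by fun_prop) hcL]
  refine integral_congr fun z _ => ?_
  simp_rw [mul_left_comm _ (g z), intervalIntegral.integral_const_mul,
    integral_sub_pow_mul_sub_pow]

theorem integral_comp_log_mul_div {Φ : ℝ → ℝ} (hΦ : Continuous Φ) {t D : ℝ} (ht : 0 < t)
    (hD : 0 < D) :
    ∫ x in (1 : ℝ)..D / t, Φ (log (t * x)) / x = ∫ w in log t..log D, Φ w := by
  have hpos : ∀ x ∈ uIcc 1 (D / t), 0 < x := fun x hx =>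
    (lt_min one_pos (div_pos hD ht)).trans_le hx.1
  have hderiv : ∀ x ∈ uIcc 1 (D / t), HasDerivAt (fun x => log (t * x)) x⁻¹ x := fun x hx =>
    (((hasDerivAt_id' x).const_mul t).log (mul_pos ht (hpos x hx)).ne').congr_deriv
      (by field_simp)
  have := integral_comp_mul_deriv hderiv
    (continuousOn_inv₀.mono fun x hx => (hpos x hx).ne') hΦ
  rw [mul_one, mul_div_cancel₀ D ht.ne'] at this
  simpa [div_eq_mul_inv] using this

theorem mul_mem_Icc_of_mem_uIcc {t D x : ℝ} (ht : 0 < t) (htD : t ≤ D)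
    (hx : x ∈ uIcc 1 (D / t)) : t * x ∈ Icc t D := by
  rw [uIcc_of_le ((one_le_div ht).mpr htD)] at hx
  exact ⟨le_mul_of_one_le_right ht.le hx.1, (le_div_iff₀' ht).mp hx.2⟩

theorem iterLogIntegral_congr {D : ℝ} {f g : ℝ → ℝ} (a : List ℕ) {t : ℝ} (ht : 0 < t)
    (htD : t ≤ D) (hfg : EqOn f g (Icc t D)) :
    iterLogIntegral D f a t = iterLogIntegral D g a t := by
  induction a generalizing t with
  | nil =>
    refine integral_congr fun x hx => ?_
    rw [hfg (mul_mem_Icc_of_mem_uIcc ht htD hx)]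
  | cons a as ih =>
    refine integral_congr fun x hx => ?_
    have htx := mul_mem_Icc_of_mem_uIcc ht htD hx
    rw [ih (ht.trans_le htx.1) htx.2 (hfg.mono (Icc_subset_Icc_left htx.1))]

theorem iterLogIntegral_eq {D : ℝ} {f : ℝ → ℝ} (hf : Continuous f) (a : List ℕ)
    (hpos : ∀ i ∈ a, 0 < i) {t : ℝ} (ht : 0 < t) (htD : t ≤ D) :
    iterLogIntegral D f a t = (a.map fun i => ((i - 1)! : ℝ)).prod / (a.sum)! *
      ∫ z in log t..log D, f (exp z) * (z - log t) ^ a.sum := by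
  have hD : 0 < D := ht.trans_le htD
  induction a generalizing t with
  | nil =>
    simp only [List.map_nil, List.prod_nil, List.sum_nil, factorial_zero, cast_one, div_one,
      pow_zero, mul_one, one_mul]
    rw [← integral_comp_log_mul_div (Φ := fun z => f (exp z)) (by fun_prop) ht hD]
    refine integral_congr fun x hx => ?_
    simp only [exp_log (ht.trans_le (mul_mem_Icc_of_mem_uIcc ht htD hx).1)]
  | cons a as ih =>
    set s := as.sum
    set C := (as.map fun i => ((i - 1)! : ℝ)).prod / (s)!
    set K : ℝ → ℝ := fun w => ∫ z in w..log D, f (exp z) * (z - w) ^ s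
    have hK : Continuous K :=
      (continuous_parametric_intervalIntegral_of_continuous (by fun_prop) continuous_id).neg.congr
        fun w => (integral_symm _ _).symm
    have hunfold : iterLogIntegral D f (a :: as) t
        = ∫ x in (1 : ℝ)..D / t, (log (t * x) - log t) ^ (a - 1) * (C * K (log (t * x))) / x := by
      refine integral_congr fun x hx => ?_
      have htx := mul_mem_Icc_of_mem_uIcc ht htD hx
      have hx0 : 0 < x := pos_of_mul_pos_right (ht.trans_le htx.1) ht.le
      rw [ih (fun i hi => hpos i (List.mem_cons_of_mem a hi)) (ht.trans_le htx.1) htx.2,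
        log_mul ht.ne' hx0.ne', add_sub_cancel_left]
      ring
    rw [hunfold, integral_comp_log_mul_div (Φ := fun w => (w - log t) ^ (a - 1) * (C * K w))
      (by fun_prop) ht hD]
    have hsum : (a :: as).sum = a - 1 + s + 1 := by
      have := hpos a List.mem_cons_self
      simp only [List.sum_cons, s]
      omega
    calc ∫ w in log t..log D, (w - log t) ^ (a - 1) * (C * K w)
        = C * ∫ w in log t..log D, (w - log t) ^ (a - 1) * K w := by
          rw [← intervalIntegral.integral_const_mul]
          simp only [mul_left_comm C]
      _ = C * (((a - 1)! * s ! / (a - 1 + s + 1)! : ℝ) *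
            ∫ z in log t..log D, f (exp z) * (z - log t) ^ (a - 1 + s + 1)) := by
          rw [integral_sub_pow_mul_integral_mul_sub_pow (by fun_prop) _ _ (log_le_log ht htD)]
      _ = _ := by
          rw [hsum, List.map_cons, List.prod_cons]
          simp only [C]
          field_simp

theorem iterated_log_integral_general_general (a : List ℕ) (hpos : ∀ i ∈ a, 0 < i) (D : ℝ) (hD : 1 < D)
    (f : ℝ → ℝ) (hf : ContinuousOn f (Set.Icc 1 D)) :
    iterLogIntegral D f a 1 =
      ((a.map (fun i => (Nat.factorial (i - 1) : ℝ))).prod /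
          (Nat.factorial a.sum : ℝ)) *
        ∫ x in (1:ℝ)..D, f x * (Real.log x) ^ a.sum / x := by
  set F := IccExtend hD.le ((Icc 1 D).domRestrict f)
  have hF : Continuous F := continuous_IccExtend_iff.mpr hf.domRestrict
  have hfF : EqOn f F (Icc 1 D) := fun x hx =>
    (IccExtend_of_mem hD.le ((Icc 1 D).domRestrict f) hx).symm
  rw [iterLogIntegral_congr a one_pos hD.le hfF, iterLogIntegral_eq hF a hpos one_pos hD.le]
  congr 1
  have := integral_comp_log_mul_div (Φ := fun w => F (exp w) * w ^ a.sum) (by fun_prop)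
    one_pos (one_pos.trans hD)
  simp only [log_one, sub_zero, div_one, one_mul] at this ⊢
  rw [← this]
  refine integral_congr fun x hx => ?_
  rw [uIcc_of_le hD.le] at hx
  simp only [exp_log (one_pos.trans_le hx.1), hfF hx]

theorem iterated_log_integral_general (m : ℕ) (hm : 0 < m) (a : List ℕ)
    (ha : a.length = m) (hpos : ∀ i ∈ a, 0 < i) (D : ℝ) (hD : 1 < D)
    (f : ℝ → ℝ) (hf : ContinuousOn f (Set.Icc 1 D)) :
    iterLogIntegral D f a 1 =
      ((a.map (fun i => (Nat.factorial (i - 1) : ℝ))).prod /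
          (Nat.factorial a.sum : ℝ)) *
        ∫ x in (1:ℝ)..D, f x * (Real.log x) ^ a.sum / x :=
  iterated_log_integral_general_general a hpos D hD f hf
end

section
/- Mertens' theorem: ∑_{p ≤ y} (log p)/p = log y + O(1), i.e., there is a constant C such that for all y ≥ 2, |∑_{p ≤ y} (log p)/p − log y| ≤ C. -/
/-!
By Legendre's formula, `n / p - 1 ≤ v_p(n!) ≤ n / (p - 1)` for every prime `p`. Weighting by
`log p` and summing over `p ≤ n`, `log n! = ∑_{p ≤ n} v_p(n!) log p` differs from
`n ∑_{p ≤ n} log p / p` by at most `θ(n) ≤ n log 4` (Chebyshev) from below and by at most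
`n ∑_p log p / (p (p - 1)) = O(n)` from above. Since `n log n - n ≤ log n! ≤ n log n`, dividing by
`n` bounds `∑_{p ≤ n} log p / p - log n`, and replacing `n = ⌊y⌋` by `y` costs at most `log 2`.
-/

open Finset Real
open scoped Nat

namespace Nat

theorem div_le_factorization_factorial {n p : ℕ} (hp : p.Prime) :
    n / p ≤ (n)!.factorization p := by
  rw [factorization_factorial hp (lt_add_of_lt_of_pos (lt_add_one (log p n)) one_pos)]
  simpa using single_le_sum (f := fun i ↦ n / p ^ i) (fun _ _ ↦ zero_le _)
    (show 1 ∈ Ico 1 (log p n + 1 + 1) by simp)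

theorem sub_one_mul_factorization_factorial_le {n p : ℕ} (hp : p.Prime) :
    (p - 1) * (n)!.factorization p ≤ n := by
  rw [sub_one_mul_factorization_factorial hp]
  exact sub_le _ _

end Nat

theorem log_factorial_eq_sum_primesLE (n : ℕ) :
    log ((n)! : ℝ) = ∑ p ∈ Nat.primesLE n, (n)!.factorization p * log p := by
  rw [log_nat_eq_sum_factorization]
  refine Finsupp.sum_of_support_subset _ (fun p hp ↦ ?_) _ (by simp)
  rw [Nat.support_factorization, Nat.mem_primeFactors] at hp
  exact Nat.mem_primesLE.2 ⟨(hp.1.dvd_factorial).1 hp.2.1, hp.1⟩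

theorem div_sub_one_mul_log_le_factorization_factorial_mul_log {n p : ℕ} (hp : p.Prime) :
    ((n : ℝ) / p - 1) * log p ≤ (n)!.factorization p * log p := by
  gcongr
  calc (n : ℝ) / p - 1 ≤ ⌊(n : ℝ) / p⌋₊ := (Nat.sub_one_lt_floor _).le
    _ = (n / p : ℕ) := by rw [Nat.floor_div_eq_div]
    _ ≤ (n)!.factorization p := mod_cast Nat.div_le_factorization_factorial hp

theorem factorization_factorial_mul_log_le {n p : ℕ} (hp : p.Prime) :
    (n)!.factorization p * log p ≤ n * (log p / p) + n * (log p / (p * (p - 1))) := by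
  have hp1 : (1 : ℝ) < p := mod_cast hp.one_lt
  have hv : ((p : ℝ) - 1) * (n)!.factorization p ≤ n := by
    rw [← Nat.cast_pred hp.pos]
    exact_mod_cast Nat.sub_one_mul_factorization_factorial_le hp
  calc ((n)!.factorization p : ℝ) * log p ≤ n / (p - 1) * log p := by
        gcongr
        rw [le_div_iff₀ (by linarith), mul_comm]
        exact hv
    _ = n * (log p / p) + n * (log p / (p * (p - 1))) := by
        field_simp [(by linarith : (p : ℝ) - 1 ≠ 0)]
        ring

theorem mul_sum_log_div_sub_sum_log_le_log_factorial (n : ℕ) :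
    n * ∑ p ∈ Nat.primesLE n, log p / p - ∑ p ∈ Nat.primesLE n, log p ≤ log ((n)! : ℝ) := by
  rw [log_factorial_eq_sum_primesLE, mul_sum, ← sum_sub_distrib]
  gcongr with p hp
  calc (n : ℝ) * (log p / p) - log p = ((n : ℝ) / p - 1) * log p := by ring
    _ ≤ _ := div_sub_one_mul_log_le_factorization_factorial_mul_log (Nat.prime_of_mem_primesLE hp)

theorem log_factorial_le_mul_sum_log_div_add (n : ℕ) :
    log ((n)! : ℝ) ≤ n * ∑ p ∈ Nat.primesLE n, log p / p +
      n * ∑ p ∈ Nat.primesLE n, log p / (p * (p - 1)) := by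
  rw [log_factorial_eq_sum_primesLE, mul_sum, mul_sum, ← sum_add_distrib]
  gcongr with p hp
  exact factorization_factorial_mul_log_le (Nat.prime_of_mem_primesLE hp)

theorem log_div_mul_sub_one_le {x : ℝ} (hx : 2 ≤ x) :
    log x / (x * (x - 1)) ≤ 4 * x ^ (-3 / 2 : ℝ) := by
  have hx0 : 0 < x := by linarith
  have hlog : log x ≤ 2 * x ^ (1 / 2 : ℝ) := by
    simpa [div_div_eq_mul_div, mul_comm] using
      log_le_rpow_div hx0.le (by norm_num : (0 : ℝ) < 1 / 2)
  have hpow : x ^ (-3 / 2 : ℝ) = x ^ (1 / 2 : ℝ) / x ^ 2 := by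
    rw [← rpow_natCast, ← rpow_sub hx0]
    norm_num
  calc log x / (x * (x - 1)) ≤ 2 * x ^ (1 / 2 : ℝ) / (x ^ 2 / 2) :=
        div_le_div₀ (by positivity) hlog (by positivity) (by nlinarith)
    _ = 4 * x ^ (-3 / 2 : ℝ) := by
        rw [hpow]
        ring

theorem log_div_mul_sub_one_nonneg (k : ℕ) : 0 ≤ log k / (k * (k - 1) : ℝ) := by
  refine div_nonneg (log_natCast_nonneg k) ?_
  rcases k with _ | k
  · simp
  · push_cast
    rw [add_sub_cancel_right]
    positivity

theorem summable_log_div_mul_sub_one :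
    Summable fun k : ℕ ↦ log k / (k * (k - 1) : ℝ) := by
  refine .of_nonneg_of_le log_div_mul_sub_one_nonneg (fun k ↦ ?_)
    ((summable_nat_rpow.2 (by norm_num : (-3 / 2 : ℝ) < -1)).mul_left 4)
  rcases lt_or_ge k 2 with hk | hk
  · interval_cases k <;> simp
  · exact log_div_mul_sub_one_le (mod_cast hk)

noncomputable def tsumLogDivMulSubOne : ℝ := ∑' k : ℕ, log k / (k * (k - 1) : ℝ)

theorem sum_primesLE_log_div_mul_sub_one_le (n : ℕ) :
    ∑ p ∈ Nat.primesLE n, log p / (p * (p - 1) : ℝ) ≤ tsumLogDivMulSubOne :=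
  summable_log_div_mul_sub_one.sum_le_tsum _ fun k _ ↦ log_div_mul_sub_one_nonneg k

theorem tsumLogDivMulSubOne_nonneg : 0 ≤ tsumLogDivMulSubOne :=
  tsum_nonneg log_div_mul_sub_one_nonneg

theorem log_factorial_le_mul_log (n : ℕ) : log ((n)! : ℝ) ≤ n * log n := by
  rw [← log_pow]
  exact log_le_log (by positivity) (mod_cast Nat.factorial_le_pow n)

theorem mul_log_sub_le_log_factorial (n : ℕ) : n * log n - n ≤ log ((n)! : ℝ) := by
  rcases eq_or_ne n 0 with rfl | hn
  · simp
  have h2π : 0 ≤ log (2 * π) := log_nonneg (by linarith [two_le_pi])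
  have := Stirling.le_log_factorial_stirling hn
  linarith [log_natCast_nonneg n]

theorem sum_log_div_sub_log_le (n : ℕ) :
    ∑ p ∈ Nat.primesLE n, log p / p - log n ≤ log 4 := by
  rcases eq_or_ne n 0 with rfl | hn
  · simpa using log_nonneg (by norm_num : (1 : ℝ) ≤ 4)
  have hθ : ∑ p ∈ Nat.primesLE n, log p ≤ log 4 * n :=
    Chebyshev.theta_eq_sum_primesLE_log n ▸ Chebyshev.theta_le_log4_mul_x n.cast_nonneg
  rw [← mul_le_mul_iff_of_pos_left (by positivity : (0 : ℝ) < n)]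
  linarith [mul_sum_log_div_sub_sum_log_le_log_factorial n, log_factorial_le_mul_log n]

theorem log_sub_sum_log_div_le (n : ℕ) :
    log n - ∑ p ∈ Nat.primesLE n, log p / p ≤ 1 + tsumLogDivMulSubOne := by
  rcases eq_or_ne n 0 with rfl | hn
  · simpa using add_nonneg zero_le_one tsumLogDivMulSubOne_nonneg
  have htail := mul_le_mul_of_nonneg_left (sum_primesLE_log_div_mul_sub_one_le n) n.cast_nonneg
  rw [← mul_le_mul_iff_of_pos_left (by positivity : (0 : ℝ) < n)]
  linarith [mul_log_sub_le_log_factorial n, log_factorial_le_mul_sum_log_div_add n]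

theorem log_le_log_floor_add_log_two {y : ℝ} (hy : 1 ≤ y) : log y ≤ log ⌊y⌋₊ + log 2 := by
  have hn : (1 : ℝ) ≤ ⌊y⌋₊ := mod_cast Nat.one_le_floor_iff y |>.2 hy
  rw [← log_mul (by positivity) (by norm_num)]
  exact log_le_log (by linarith) (by linarith [Nat.lt_floor_add_one y])

theorem mertens_first_theorem :
    ∃ C : ℝ, ∀ y : ℝ, 2 ≤ y →
      |(∑ p ∈ Finset.filter Nat.Prime (Finset.Icc 1 ⌊y⌋₊), Real.log p / p) -
          Real.log y| ≤ C := by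
  refine ⟨log 4 + log 2 + 1 + tsumLogDivMulSubOne, fun y hy ↦ ?_⟩
  rw [← Nat.primesLE_eq_filter_Icc_one]
  have hfloor_le_log : log ⌊y⌋₊ ≤ log y :=
    log_le_log (mod_cast Nat.floor_pos.2 (by linarith)) (Nat.floor_le (by linarith))
  have hlog_le_floor := log_le_log_floor_add_log_two (by linarith : (1 : ℝ) ≤ y)
  have hlog2 : 0 ≤ log 2 := log_nonneg one_le_two
  have hlog4 : 0 ≤ log 4 := log_nonneg (by norm_num)
  rw [abs_sub_le_iff]
  constructor
  · linarith [sum_log_div_sub_log_le ⌊y⌋₊, tsumLogDivMulSubOne_nonneg]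
  · linarith [log_sub_sum_log_div_le ⌊y⌋₊]
end

section
/- For real s ≥ 1 and continuous h : [0,1]³ → ℝ, the change of variables u = 1 − log x₁/log K, v = 1 − log x₂/log K, w = 1 − log(x₁x₂x₃)/log K transforms ∫₁^K (1/x₁) ∫₁^{K/x₁} (1/x₂) ∫₁^{K/(x₁x₂)} h(1−log x₁/log K, 1−log x₂/log K, 1−log(x₁x₂x₃)/log K) (log x₃)^{s−1}/x₃ dx₃ dx₂ dx₁ into (log K)^{s+2} ∫₀¹ ∫_{1−u}^1 ∫₀^{u+v−1} (u+v−w−1)^{s−1} h(u,v,w) dw dv du. -/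
/-!
Each of the three substitutions has the form `t = c - log x / log K`, so that `dx / x = -log K dt`
and every one contributes a factor `log K`. Substituting for `x₃` first also turns `(log x₃)^(s-1)`
into `(log K)^(s-1) (u + v - w - 1)^(s-1)`, which gives the total power `s + 2`.
Since `h` is only continuous on the cube, it is first replaced by a continuous extension; the two
sides only evaluate `h` on the cube, and the extension makes the intermediate integrals continuous
in their parameters, as the substitution rule requires.
-/

open intervalIntegral MeasureTheory Set Real

theorem ContinuousOn.exists_continuous_eq_on_Icc_cube {β : Type*} [TopologicalSpace β]
    {a b : ℝ} (hab : a ≤ b) {h : ℝ → ℝ → ℝ → β}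
    (hh : ContinuousOn (fun p : ℝ × ℝ × ℝ => h p.1 p.2.1 p.2.2)
      (Icc a b ×ˢ Icc a b ×ˢ Icc a b)) :
    ∃ H : ℝ → ℝ → ℝ → β, Continuous (fun p : ℝ × ℝ × ℝ => H p.1 p.2.1 p.2.2) ∧
      ∀ u ∈ Icc a b, ∀ v ∈ Icc a b, ∀ w ∈ Icc a b, H u v w = h u v w := by
  let clamp : ℝ → ℝ := fun x => projIcc a b hab x
  have hclamp : Continuous clamp := continuous_subtype_val.comp continuous_projIcc
  refine ⟨fun u v w => h (clamp u) (clamp v) (clamp w), ?_, fun u hu v hv w hw => ?_⟩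
  · exact hh.comp_continuous (f := fun q : ℝ × ℝ × ℝ => (clamp q.1, clamp q.2.1, clamp q.2.2))
      (by fun_prop) fun q => ⟨(projIcc a b hab _).2, (projIcc a b hab _).2, (projIcc a b hab _).2⟩
  · simp [clamp, projIcc_of_mem hab hu, projIcc_of_mem hab hv, projIcc_of_mem hab hw]

theorem integral_one_div_mul_comp_log {a b : ℝ} (ha : 0 < a) (hb : 0 < b) {g : ℝ → ℝ}
    (hg : Continuous g) :
    ∫ x in a..b, 1 / x * g (log x) = ∫ t in log a..log b, g t := by
  have hpos : ∀ x ∈ uIcc a b, 0 < x := fun x hx => (lt_min ha hb).trans_le hx.1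
  rw [← integral_comp_mul_deriv (fun x hx => hasDerivAt_log (hpos x hx).ne')
    (continuousOn_inv₀.mono fun x hx => (hpos x hx).ne') hg]
  exact integral_congr fun x _ => by simp [mul_comm]

theorem integral_one_div_mul_comp_sub_log_div {a b L : ℝ} (ha : 0 < a) (hb : 0 < b)
    (hL : L ≠ 0) {g : ℝ → ℝ} (hg : Continuous g) (c : ℝ) :
    ∫ x in a..b, 1 / x * g (c - log x / L) = L * ∫ t in c - log b / L..c - log a / L, g t := by
  rw [integral_one_div_mul_comp_log ha hb (g := fun t => g (c - t / L)) (by fun_prop),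
    integral_comp_sub_div _ hL, smul_eq_mul]

noncomputable def innerIntegral (s : ℝ) (h : ℝ → ℝ → ℝ → ℝ) (u v : ℝ) : ℝ :=
  ∫ w in (0:ℝ)..(u + v - 1), (u + v - w - 1) ^ (s - 1) * h u v w

noncomputable def tetrahedronIntegral (s : ℝ) (h : ℝ → ℝ → ℝ → ℝ) : ℝ :=
  ∫ u in (0:ℝ)..1, ∫ v in (1 - u)..1, innerIntegral s h u v

noncomputable def logTripleIntegral (K s : ℝ) (h : ℝ → ℝ → ℝ → ℝ) : ℝ :=
  ∫ x₁ in (1:ℝ)..K, (1 / x₁) *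
    ∫ x₂ in (1:ℝ)..(K / x₁), (1 / x₂) *
      ∫ x₃ in (1:ℝ)..(K / (x₁ * x₂)),
        h (1 - log x₁ / log K) (1 - log x₂ / log K) (1 - log (x₁ * x₂ * x₃) / log K) *
          log x₃ ^ (s - 1) / x₃

variable {K s : ℝ} {f g H : ℝ → ℝ → ℝ → ℝ}

theorem one_sub_log_div_log_mem_Icc {x : ℝ} (hK : 1 < K) (h1x : 1 ≤ x) (hxK : x ≤ K) :
    1 - log x / log K ∈ Icc (0:ℝ) 1 := by
  have hL := log_pos hK
  constructor
  · rw [sub_nonneg, div_le_one hL]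
    exact log_le_log (by linarith) hxK
  · linarith [div_nonneg (log_nonneg h1x) hL.le]

theorem logTripleIntegral_congr (hK : 1 < K)
    (hfg : ∀ u ∈ Icc (0:ℝ) 1, ∀ v ∈ Icc (0:ℝ) 1, ∀ w ∈ Icc (0:ℝ) 1, f u v w = g u v w) :
    logTripleIntegral K s f = logTripleIntegral K s g := by
  refine integral_congr fun x₁ hx₁ => congrArg _ <| integral_congr fun x₂ hx₂ =>
    congrArg _ <| integral_congr fun x₃ hx₃ => ?_
  rw [uIcc_of_le hK.le] at hx₁
  have hx₁0 : 0 < x₁ := by linarith [hx₁.1]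
  rw [uIcc_of_le ((one_le_div hx₁0).2 hx₁.2)] at hx₂
  have h12 : x₁ * x₂ ≤ K := by rw [mul_comm, ← le_div_iff₀ hx₁0]; exact hx₂.2
  have h1_12 : 1 ≤ x₁ * x₂ := one_le_mul_of_one_le_of_one_le hx₁.1 hx₂.1
  rw [uIcc_of_le ((one_le_div (by linarith)).2 h12)] at hx₃
  have h123 : x₁ * x₂ * x₃ ≤ K := by rw [mul_comm, ← le_div_iff₀ (by linarith)]; exact hx₃.2
  have hx₂K : x₂ ≤ K := hx₂.2.trans (div_le_self (by linarith) hx₁.1)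
  rw [hfg _ (one_sub_log_div_log_mem_Icc hK hx₁.1 hx₁.2) _
    (one_sub_log_div_log_mem_Icc hK hx₂.1 hx₂K) _
    (one_sub_log_div_log_mem_Icc hK (one_le_mul_of_one_le_of_one_le h1_12 hx₃.1) h123)]

theorem tetrahedronIntegral_congr
    (hfg : ∀ u ∈ Icc (0:ℝ) 1, ∀ v ∈ Icc (0:ℝ) 1, ∀ w ∈ Icc (0:ℝ) 1, f u v w = g u v w) :
    tetrahedronIntegral s f = tetrahedronIntegral s g := by
  refine integral_congr fun u hu => integral_congr fun v hv => integral_congr fun w hw => ?_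
  rw [uIcc_of_le zero_le_one] at hu
  rw [uIcc_of_le (by linarith [hu.1] : 1 - u ≤ 1)] at hv
  rw [uIcc_of_le (by linarith [hv.1] : (0:ℝ) ≤ u + v - 1)] at hw
  rw [hfg u hu v ⟨by linarith [hv.1, hu.2], hv.2⟩ w ⟨hw.1, by linarith [hw.2, hu.2, hv.2]⟩]

theorem continuous_innerIntegral (hs : 1 ≤ s)
    (hH : Continuous fun p : ℝ × ℝ × ℝ => H p.1 p.2.1 p.2.2) :
    Continuous fun p : ℝ × ℝ => innerIntegral s H p.1 p.2 := by
  refine continuous_parametric_intervalIntegral_of_continuous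
    (f := fun (p : ℝ × ℝ) w => (p.1 + p.2 - w - 1) ^ (s - 1) * H p.1 p.2 w) ?_ (by fun_prop)
  exact ((by fun_prop : Continuous fun q : (ℝ × ℝ) × ℝ => q.1.1 + q.1.2 - q.2 - 1).rpow_const
    fun _ => Or.inr (by linarith)).mul
    (hH.comp (by fun_prop : Continuous fun q : (ℝ × ℝ) × ℝ => (q.1.1, q.1.2, q.2)))

theorem continuous_integral_innerIntegral (hs : 1 ≤ s)
    (hH : Continuous fun p : ℝ × ℝ × ℝ => H p.1 p.2.1 p.2.2) :
    Continuous fun u => ∫ v in (1 - u)..1, innerIntegral s H u v := by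
  have hreversed := continuous_parametric_intervalIntegral_of_continuous (μ := volume)
    (a₀ := 1) (f := innerIntegral s H) (continuous_innerIntegral hs hH)
    (by fun_prop : Continuous fun u : ℝ => 1 - u)
  simp_rw [integral_symm 1]
  exact hreversed.neg

theorem integral_inner_log_substitution (hK : 1 < K) (hs : 1 ≤ s)
    (hH : Continuous fun p : ℝ × ℝ × ℝ => H p.1 p.2.1 p.2.2) {x₁ x₂ : ℝ} (hx₁ : 0 < x₁)
    (hx₂ : 0 < x₂) (hx : x₁ * x₂ ≤ K) :
    ∫ x₃ in (1:ℝ)..(K / (x₁ * x₂)),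
        H (1 - log x₁ / log K) (1 - log x₂ / log K) (1 - log (x₁ * x₂ * x₃) / log K) *
          log x₃ ^ (s - 1) / x₃ =
      log K ^ s * innerIntegral s H (1 - log x₁ / log K) (1 - log x₂ / log K) := by
  set a := 1 - log x₁ / log K
  set b := 1 - log x₂ / log K
  have hL : 0 < log K := log_pos hK
  have hx₁₂ : 0 < x₁ * x₂ := mul_pos hx₁ hx₂
  have hlog : log (K / (x₁ * x₂)) = log K * (a + b - 1) := by
    rw [log_div (by linarith) hx₁₂.ne', log_mul hx₁.ne' hx₂.ne']
    simp only [a, b]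
    field_simp
    ring
  have hc : 0 ≤ a + b - 1 := by
    rw [← mul_nonneg_iff_of_pos_left hL, ← hlog]
    exact log_nonneg ((one_le_div hx₁₂).2 hx)
  let g : ℝ → ℝ := fun w => H a b w * (log K * (a + b - 1 - w)) ^ (s - 1)
  have hg : Continuous g :=
    (hH.comp (by fun_prop : Continuous fun w : ℝ => (a, b, w))).mul
      ((by fun_prop : Continuous fun w => log K * (a + b - 1 - w)).rpow_const
        fun _ => Or.inr (by linarith))
  calc _ = ∫ x₃ in (1:ℝ)..(K / (x₁ * x₂)), 1 / x₃ * g (a + b - 1 - log x₃ / log K) := by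
        refine integral_congr fun x₃ hx₃ => ?_
        have hx₃ : 0 < x₃ := (lt_min one_pos (div_pos (by linarith) hx₁₂)).trans_le hx₃.1
        have harg : 1 - log (x₁ * x₂ * x₃) / log K = a + b - 1 - log x₃ / log K := by
          rw [log_mul hx₁₂.ne' hx₃.ne', log_mul hx₁.ne' hx₂.ne']
          ring
        have hpow : log K * (a + b - 1 - (a + b - 1 - log x₃ / log K)) = log x₃ := by
          field_simp
          ring
        simp only [g, harg, hpow]
        ring
    _ = log K * ∫ w in (0:ℝ)..(a + b - 1), g w := by
        rw [integral_one_div_mul_comp_sub_log_div one_pos (div_pos (by linarith) hx₁₂) hL.ne' hg,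
          hlog, log_one]
        congr 2 <;> field_simp <;> ring
    _ = log K * ∫ w in (0:ℝ)..(a + b - 1),
          log K ^ (s - 1) * ((a + b - w - 1) ^ (s - 1) * H a b w) := by
        refine congrArg _ (integral_congr fun w hw => ?_)
        rw [uIcc_of_le hc] at hw
        simp only [g]
        rw [mul_rpow hL.le (by linarith [hw.2]), show a + b - 1 - w = a + b - w - 1 by ring]
        ring
    _ = log K ^ s * innerIntegral s H a b := by
        rw [intervalIntegral.integral_const_mul, ← mul_assoc,
          ← rpow_one_add' hL.le (by linarith), add_sub_cancel]
        rfl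

theorem integral_middle_log_substitution (hK : 1 < K) (hs : 1 ≤ s)
    (hH : Continuous fun p : ℝ × ℝ × ℝ => H p.1 p.2.1 p.2.2) {x₁ : ℝ} (hx₁ : 0 < x₁) :
    ∫ x₂ in (1:ℝ)..(K / x₁),
        1 / x₂ * (log K ^ s * innerIntegral s H (1 - log x₁ / log K) (1 - log x₂ / log K)) =
      log K ^ (s + 1) *
        ∫ v in (1 - (1 - log x₁ / log K))..1, innerIntegral s H (1 - log x₁ / log K) v := by
  have hL := log_pos hK
  have hg : Continuous fun v => log K ^ s * innerIntegral s H (1 - log x₁ / log K) v :=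
    continuous_const.mul ((continuous_innerIntegral hs hH).comp (by fun_prop :
      Continuous fun v : ℝ => (1 - log x₁ / log K, v)))
  rw [integral_one_div_mul_comp_sub_log_div one_pos (div_pos (by linarith) hx₁) hL.ne' hg,
    intervalIntegral.integral_const_mul, ← mul_assoc, rpow_add_one hL.ne', mul_comm (log K ^ s),
    log_div (by linarith) hx₁.ne', log_one, zero_div, sub_zero]
  congr 3
  field_simp

theorem logTripleIntegral_eq_of_continuous (hK : 1 < K) (hs : 1 ≤ s)
    (hH : Continuous fun p : ℝ × ℝ × ℝ => H p.1 p.2.1 p.2.2) :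
    logTripleIntegral K s H = log K ^ (s + 2) * tetrahedronIntegral s H := by
  have hL := log_pos hK
  have hM : Continuous fun u => log K ^ (s + 1) * ∫ v in (1 - u)..1, innerIntegral s H u v :=
    continuous_const.mul (continuous_integral_innerIntegral hs hH)
  calc logTripleIntegral K s H
      = ∫ x₁ in (1:ℝ)..K, 1 / x₁ * (fun u => log K ^ (s + 1) *
          ∫ v in (1 - u)..1, innerIntegral s H u v) (1 - log x₁ / log K) := by
        refine integral_congr fun x₁ hx₁ => ?_
        rw [uIcc_of_le hK.le] at hx₁
        have hx₁0 : 0 < x₁ := by linarith [hx₁.1]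
        simp only
        rw [← integral_middle_log_substitution hK hs hH hx₁0]
        refine congrArg _ (integral_congr fun x₂ hx₂ => congrArg _ ?_)
        rw [uIcc_of_le ((one_le_div hx₁0).2 hx₁.2)] at hx₂
        exact integral_inner_log_substitution hK hs hH hx₁0 (by linarith [hx₂.1])
          (by rw [mul_comm, ← le_div_iff₀ hx₁0]; exact hx₂.2)
    _ = log K * ∫ u in (0:ℝ)..1, log K ^ (s + 1) * ∫ v in (1 - u)..1, innerIntegral s H u v := by
        rw [integral_one_div_mul_comp_sub_log_div one_pos (by linarith) hL.ne' hM, log_one,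
          div_self hL.ne']
        norm_num
    _ = log K ^ (s + 2) * tetrahedronIntegral s H := by
        rw [intervalIntegral.integral_const_mul, ← mul_assoc, mul_comm (log K),
          ← rpow_add_one hL.ne', show s + 1 + 1 = s + 2 by ring]
        rfl

theorem triple_log_substitution_integral (K s : ℝ) (hK : 1 < K) (hs : 1 ≤ s)
    (h : ℝ → ℝ → ℝ → ℝ)
    (hh : ContinuousOn (fun p : ℝ × ℝ × ℝ => h p.1 p.2.1 p.2.2)
      (Set.Icc 0 1 ×ˢ Set.Icc 0 1 ×ˢ Set.Icc 0 1)) :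
    (∫ x₁ in (1:ℝ)..K, (1 / x₁) *
        ∫ x₂ in (1:ℝ)..(K / x₁), (1 / x₂) *
          ∫ x₃ in (1:ℝ)..(K / (x₁ * x₂)),
            h (1 - Real.log x₁ / Real.log K) (1 - Real.log x₂ / Real.log K)
                (1 - Real.log (x₁ * x₂ * x₃) / Real.log K) *
              Real.log x₃ ^ (s - 1) / x₃) =
      Real.log K ^ (s + 2) *
        ∫ u in (0:ℝ)..1, ∫ v in (1 - u)..1, ∫ w in (0:ℝ)..(u + v - 1),
          (u + v - w - 1) ^ (s - 1) * h u v w := by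
  obtain ⟨H, hHc, hHh⟩ := hh.exists_continuous_eq_on_Icc_cube zero_le_one
  calc _ = logTripleIntegral K s h := rfl
    _ = logTripleIntegral K s H :=
        logTripleIntegral_congr hK fun u hu v hv w hw => (hHh u hu v hv w hw).symm
    _ = log K ^ (s + 2) * tetrahedronIntegral s H := logTripleIntegral_eq_of_continuous hK hs hHc
    _ = log K ^ (s + 2) * tetrahedronIntegral s h := by rw [tetrahedronIntegral_congr hHh]
end
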